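/- Let f ∈ C_0^∞(A_{1,r}) for some r > 1 and let f̃(x) = |x|^{-4} f(x/|x|²). Let D₁f(p,φ) = ∫∫_{D_{1/p,φ}} f dA be the integral of f over the disc of diameter 1/p with boundary through the origin and center at polar angle φ. Then for all p > 0, ∂/∂p D₁f(p,φ) = −Rf̃(p,φ), where Rf̃(p,φ) = ∫_{L_{p,φ}} f̃ ds is the Radon transform over the line {x : x·(cos φ, sin φ) = p}. -/

import Mathlib

noncomputable section
open Real MeasureTheory intervalIntegral Set Filter Topology ENNReal Metric

/-- Points of the Euclidean plane. -/
abbrev E2 := EuclideanSpace ℝ (Fin 2)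

/-- The point of `ℝ²` with coordinates `(a, b)`. -/
def pt (a b : ℝ) : E2 := (WithLp.equiv 2 (Fin 2 → ℝ)).symm ![a, b]

/-- The disc transform `D₁f(p,φ)`: the integral of `f` over the disc of diameter `1/p`
whose boundary passes through the origin, with centre at polar coordinates `(1/(2p), φ)`,
written in polar coordinates. -/
def D1 (f : E2 → ℝ) (p φ : ℝ) : ℝ :=
  ∫ θ in (-(π/2))..(π/2), ∫ ρ in (0:ℝ)..(Real.cos θ / p),
    ρ * f (pt (ρ * Real.cos (θ + φ)) (ρ * Real.sin (θ + φ)))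

/-- The Radon transform: integral of `g` over the line `x·(cos φ, sin φ) = p`. -/
def Radon (g : E2 → ℝ) (p φ : ℝ) : ℝ :=
  ∫ t : ℝ, g (pt (p * Real.cos φ - t * Real.sin φ) (p * Real.sin φ + t * Real.cos φ))

/-- The inversion `f̃(x) = |x|⁻⁴ f(x/|x|²)`. -/
def ftil (f : E2 → ℝ) (x : E2) : ℝ := (‖x‖^4)⁻¹ * f ((‖x‖^2)⁻¹ • x)

/-- One-dimensional Fourier transform, convention `(2π)^{-1/2} ∫ g(p) e^{-ipσ} dp`. -/
def FT1 (g : ℝ → ℝ) (σ : ℝ) : ℂ :=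
  (((2 * π) ^ (-(1:ℝ)/2) : ℝ) : ℂ) * ∫ p : ℝ, (g p : ℂ) * Complex.exp (-Complex.I * p * σ)

/-- Two-dimensional Fourier transform, convention `(2π)^{-1} ∫ g(x) e^{-ix·ξ} dx`. -/
def FT2 (g : E2 → ℝ) (ξ : E2) : ℂ :=
  (((2 * π)⁻¹ : ℝ) : ℂ) * ∫ x : E2, (g x : ℂ) * Complex.exp (-Complex.I * ((inner ℝ x ξ : ℝ) : ℂ))

/-- Squared Sobolev `H^α` norm of a real function on `ℝ²` (Fourier definition). -/
def Hnorm2Sq (α : ℝ) (g : E2 → ℝ) : ℝ≥0∞ :=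
  ∫⁻ ξ : E2, ENNReal.ofReal ((1 + ‖ξ‖^2)^α) * (‖FT2 g ξ‖₊ : ℝ≥0∞)^2

/-- The odd extension `Df` of the disc transform, given the one-sided limit data
`L φ = D₁f(0⁺, φ)`, with jump correction `c(φ) = (L(φ+π) − L(φ))/2`. -/
def Dodd (f : E2 → ℝ) (L : ℝ → ℝ) (p φ : ℝ) : ℝ :=
  if 0 < p then D1 f p φ + (L (φ + π) - L φ) / 2
  else if p < 0 then D1 f (-p) (φ + π) - (L (φ + π) - L φ) / 2
  else (L φ + L (φ + π)) / 2

/-- The open disc `D_r` (interior of the detector ring). -/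
def Dr (r : ℝ) : Set E2 := {x | (x 0)^2 + (x 1 - (r+1)/2)^2 < ((r-1)/2)^2}

/-- `L²([−1,1] × S¹)` norm of a function `g(p,φ)`. -/
def L2n (g : ℝ → ℝ → ℝ) : ℝ :=
  Real.sqrt (∫ φ in (0:ℝ)..(2*π), ∫ p in (-1:ℝ)..1, (g p φ)^2)

/-! ### Auxiliary lemmas -/

lemma pt_zero (a b : ℝ) : pt a b 0 = a := rfl
lemma pt_one (a b : ℝ) : pt a b 1 = b := rfl

lemma norm_pt (a b : ℝ) : ‖pt a b‖ = Real.sqrt (a^2 + b^2) := by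
  rw [EuclideanSpace.norm_eq]
  simp [Fin.sum_univ_two, Real.norm_eq_abs, sq_abs]
  rfl

lemma norm_pt_sq (a b : ℝ) : ‖pt a b‖^2 = a^2 + b^2 := by
  rw [norm_pt, Real.sq_sqrt (by positivity)]

lemma smul_pt (c a b : ℝ) : c • pt a b = pt (c*a) (c*b) := by
  ext i; fin_cases i <;> rfl

lemma continuous_pt2 {X : Type*} [TopologicalSpace X] {a b : X → ℝ}
    (ha : Continuous a) (hb : Continuous b) : Continuous fun x => pt (a x) (b x) := by
  have h : Continuous fun x : X => (![a x, b x] : Fin 2 → ℝ) := by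
    apply continuous_pi; intro i; fin_cases i <;> simpa
  exact ((PiLp.continuousLinearEquiv 2 ℝ (fun _ : Fin 2 => ℝ)).symm.continuous).comp h

/-- Change of variables `t = p tan θ` in the Radon transform of the inversion. -/
lemma radon_ftil_eq (f : E2 → ℝ) (p φ : ℝ) (hp : 0 < p) :
    Radon (ftil f) p φ = ∫ θ in Ioo (-(π/2)) (π/2),
      Real.cos θ^2/p^3 * f (pt (Real.cos θ/p * Real.cos (θ+φ)) (Real.cos θ/p * Real.sin (θ+φ))) := by
  have himg : (fun θ => p * Real.tan θ) '' Ioo (-(π/2)) (π/2) = univ := by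
    rw [show (fun θ => p * Real.tan θ) = (fun y => p * y) ∘ Real.tan from rfl, Set.image_comp,
      Real.image_tan_Ioo, Set.image_univ, Set.range_eq_univ.mpr (mul_left_surjective₀ hp.ne')]
  have hderiv : ∀ θ ∈ Ioo (-(π/2)) (π/2), HasDerivWithinAt (fun θ => p * Real.tan θ)
      (p * (1 / Real.cos θ^2)) (Ioo (-(π/2)) (π/2)) θ := fun θ hθ =>
    ((Real.hasDerivAt_tan (ne_of_gt (Real.cos_pos_of_mem_Ioo hθ))).const_mul p).hasDerivWithinAt
  have hinj : InjOn (fun θ => p * Real.tan θ) (Ioo (-(π/2)) (π/2)) := fun a ha b hb h =>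
    Real.injOn_tan ha hb (mul_left_cancel₀ hp.ne' h)
  have := MeasureTheory.integral_image_eq_integral_abs_deriv_smul measurableSet_Ioo hderiv hinj
    (fun t => ftil f (pt (p * Real.cos φ - t * Real.sin φ) (p * Real.sin φ + t * Real.cos φ)))
  rw [himg] at this
  rw [Radon, ← setIntegral_univ, this]
  refine setIntegral_congr_fun measurableSet_Ioo (fun θ hθ => ?_)
  have hc : 0 < Real.cos θ := Real.cos_pos_of_mem_Ioo hθ
  have hc' : Real.cos θ ≠ 0 := hc.ne'
  have hp' : p ≠ 0 := hp.ne'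
  have hAB : (p * Real.cos φ - p * Real.tan θ * Real.sin φ)^2
      + (p * Real.sin φ + p * Real.tan θ * Real.cos φ)^2 = p^2 / Real.cos θ^2 := by
    have hsθ := Real.sin_sq_add_cos_sq θ
    have hsφ := Real.sin_sq_add_cos_sq φ
    rw [Real.tan_eq_sin_div_cos]
    field_simp
    linear_combination (Real.sin φ^2 + Real.cos φ^2) * hsθ + hsφ
  have hx2 : ‖pt (p * Real.cos φ - p * Real.tan θ * Real.sin φ)
      (p * Real.sin φ + p * Real.tan θ * Real.cos φ)‖^2 = p^2 / Real.cos θ^2 := by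
    rw [norm_pt_sq, hAB]
  have hx4 : ‖pt (p * Real.cos φ - p * Real.tan θ * Real.sin φ)
      (p * Real.sin φ + p * Real.tan θ * Real.cos φ)‖^4 = (p^2 / Real.cos θ^2)^2 := by
    rw [show ∀ x : ℝ, x^4 = (x^2)^2 from fun x => by ring, hx2]
  have hA : (p^2 / Real.cos θ^2)⁻¹ * (p * Real.cos φ - p * Real.tan θ * Real.sin φ)
      = Real.cos θ/p * Real.cos (θ+φ) := by
    rw [Real.cos_add, Real.tan_eq_sin_div_cos]; field_simp
  have hB : (p^2 / Real.cos θ^2)⁻¹ * (p * Real.sin φ + p * Real.tan θ * Real.cos φ)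
      = Real.cos θ/p * Real.sin (θ+φ) := by
    rw [Real.sin_add, Real.tan_eq_sin_div_cos]; field_simp; ring
  simp only [ftil, hx4, hx2, smul_pt, hA, hB, smul_eq_mul]
  rw [abs_of_pos (by positivity)]
  field_simp

/-- For `f ∈ C_0^∞(A_{1,r})`, `r > 1`, and `f̃(x) = |x|⁻⁴ f(x/|x|²)`, the disc transform
satisfies `∂/∂p D₁f(p,φ) = −Rf̃(p,φ)` for all `p > 0` and all `φ`. -/
theorem deriv_disc_transform_eq_neg_radon (r : ℝ) (hr : 1 < r) (f : E2 → ℝ)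
    (hf : ContDiff ℝ (⊤ : ℕ∞) f) (hc : HasCompactSupport f)
    (hs : tsupport f ⊆ {x : E2 | 1 < ‖x‖ ∧ ‖x‖ < r}) :
    ∀ p φ : ℝ, 0 < p → HasDerivAt (fun q => D1 f q φ) (-(Radon (ftil f) p φ)) p := by
  intro p φ hp
  obtain ⟨M, hM⟩ := hc.exists_bound_of_continuous hf.continuous
  have hM0 : 0 ≤ M := le_trans (norm_nonneg _) (hM 0)
  set g : ℝ → ℝ → ℝ :=
    fun θ ρ => ρ * f (pt (ρ * Real.cos (θ + φ)) (ρ * Real.sin (θ + φ))) with hg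
  have hgc : Continuous (Function.uncurry g) := by
    have : Function.uncurry g = fun q : ℝ × ℝ =>
        q.2 * f (pt (q.2 * Real.cos (q.1 + φ)) (q.2 * Real.sin (q.1 + φ))) := rfl
    rw [this]
    exact continuous_snd.mul (hf.continuous.comp (continuous_pt2 (by fun_prop) (by fun_prop)))
  set F' : ℝ → ℝ → ℝ := fun q θ =>
    -(Real.cos θ^2/q^3) * f (pt (Real.cos θ/q * Real.cos (θ+φ)) (Real.cos θ/q * Real.sin (θ+φ)))
    with hF'
  have hballpos : ∀ x ∈ ball p (p/2), p/2 < x := by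
    intro x hx
    rw [mem_ball, Real.dist_eq, abs_lt] at hx
    linarith [hx.1]
  have h_diff : ∀ θ : ℝ, θ ∈ Set.uIoc (-(π/2)) (π/2) → ∀ x ∈ ball p (p/2),
      HasDerivAt (fun q => ∫ ρ in (0:ℝ)..(Real.cos θ / q), g θ ρ) (F' x θ) x := by
    intro θ _ x hx
    have hx0 : 0 < x := lt_trans (by positivity) (hballpos x hx)
    have hgθ : Continuous (g θ) := hgc.comp (Continuous.prodMk_right θ)
    have hG : HasDerivAt (fun u => ∫ ρ in (0:ℝ)..u, g θ ρ) (g θ (Real.cos θ / x))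
        (Real.cos θ / x) :=
      intervalIntegral.integral_hasDerivAt_right (hgθ.intervalIntegrable _ _)
        (hgθ.stronglyMeasurableAtFilter _ _) hgθ.continuousAt
    have ha : HasDerivAt (fun q : ℝ => Real.cos θ / q) (Real.cos θ * -(x^2)⁻¹) x := by
      simpa only [div_eq_mul_inv] using (hasDerivAt_inv hx0.ne').const_mul (Real.cos θ)
    have := hG.comp x ha
    refine this.congr_deriv ?_
    simp only [hg, hF']
    field_simp
  have h_bound : ∀ θ : ℝ, θ ∈ Set.uIoc (-(π/2)) (π/2) → ∀ x ∈ ball p (p/2),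
      ‖F' x θ‖ ≤ 1/(p/2)^3 * M := by
    intro θ _ x hx
    have hx0 : p/2 < x := hballpos x hx
    have hx0' : 0 < x := lt_trans (by positivity) hx0
    have : ‖F' x θ‖ = Real.cos θ^2/x^3 *
        ‖f (pt (Real.cos θ/x * Real.cos (θ+φ)) (Real.cos θ/x * Real.sin (θ+φ)))‖ := by
      rw [hF']
      rw [norm_mul, norm_neg, Real.norm_eq_abs (Real.cos θ^2/x^3), abs_of_nonneg (by positivity)]
    rw [this]
    have h1 : Real.cos θ^2/x^3 ≤ 1/(p/2)^3 :=
      div_le_div₀ (by norm_num) (Real.cos_sq_le_one θ) (by positivity)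
        (pow_le_pow_left₀ (by positivity) hx0.le 3)
    have h2 := hM (pt (Real.cos θ/x * Real.cos (θ+φ)) (Real.cos θ/x * Real.sin (θ+φ)))
    exact mul_le_mul h1 h2 (norm_nonneg _) (by positivity)
  have hF_meas : ∀ᶠ x in 𝓝 p, AEStronglyMeasurable
      (fun θ => ∫ ρ in (0:ℝ)..(Real.cos θ / x), g θ ρ)
      (volume.restrict (Set.uIoc (-(π/2)) (π/2))) := by
    refine Eventually.of_forall (fun x => ?_)
    exact (intervalIntegral.continuous_parametric_intervalIntegral_of_continuous hgc
      (by fun_prop : Continuous fun θ => Real.cos θ / x)).aestronglyMeasurable.restrict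
  have hF_int : IntervalIntegrable (fun θ => ∫ ρ in (0:ℝ)..(Real.cos θ / p), g θ ρ)
      volume (-(π/2)) (π/2) :=
    (intervalIntegral.continuous_parametric_intervalIntegral_of_continuous hgc
      (by fun_prop : Continuous fun θ => Real.cos θ / p)).intervalIntegrable _ _
  have hF'_meas : AEStronglyMeasurable (F' p) (volume.restrict (Set.uIoc (-(π/2)) (π/2))) := by
    have : Continuous (F' p) := by
      apply Continuous.mul
      · fun_prop
      · exact hf.continuous.comp (continuous_pt2 (by fun_prop) (by fun_prop))
    exact this.aestronglyMeasurable.restrict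
  have key := intervalIntegral.hasDerivAt_integral_of_dominated_loc_of_deriv_le
    (ball_mem_nhds p (half_pos hp)) hF_meas hF_int hF'_meas
    (Eventually.of_forall h_bound) intervalIntegrable_const
    (Eventually.of_forall h_diff)
  have hD : (fun q => D1 f q φ)
      = fun x => ∫ θ in (-(π/2))..(π/2), ∫ ρ in (0:ℝ)..(Real.cos θ / x), g θ ρ := rfl
  rw [hD]
  have hval : ∫ θ in (-(π/2))..(π/2), F' p θ = -(Radon (ftil f) p φ) := by
    rw [radon_ftil_eq f p φ hp]
    have hle : -(π/2) ≤ π/2 := by linarith [Real.pi_pos]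
    rw [intervalIntegral.integral_of_le hle, MeasureTheory.integral_Ioc_eq_integral_Ioo,
      ← MeasureTheory.integral_neg]
    refine setIntegral_congr_fun measurableSet_Ioo (fun θ _ => ?_)
    simp only [hF', neg_mul, neg_neg]
  rw [← hval]
  exact key.2
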